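/- arXiv:1608.02224 — 2 statements merged into one kernel-verified Lean document; each statement's English description precedes it below -/
import Mathlib

section
/- Let λ > 0, α ∈ (0,1), t ≥ 0, and u ∈ [0,1). Then exp(−λ^α t (1−u)^α) = ∑_{n=0}^∞ u^n [ ∑_{r=0}^∞ ((−1)^{r+n}/r!) λ^{α r} t^r binom(α r, n) ], where both series converge. -/
open MeasureTheory

/-- Generalized binomial coefficient `binom(x, n) = (∏_{j=0}^{n-1} (x - j)) / n!`. -/
noncomputable def gbinom (x : ℝ) (n : ℕ) : ℝ :=
  (∏ j ∈ Finset.range n, (x - (j : ℝ))) / (n.factorial : ℝ)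

/-- `β_r(s₁, …, s_r) = ∑_{j=1}^r α(s_j)`. -/
noncomputable def betaSum (α : ℝ → ℝ) {r : ℕ} (s : Fin r → ℝ) : ℝ :=
  ∑ j, α (s j)

/-!
Expand `exp (y (1 + v)^β) = ∑_r (y (1 + v)^β)^r / r!` and each `(1 + v)^(β r)` by the binomial
series, then exchange the two summations. The exchange is justified by absolute convergence:
`|binom(x, n)| ≤ (-1)^n binom(-|x|, n)`, and the binomial series at `-|v|` sums the majorant
to `exp (|y| (1 - |v|)^(-|β|))`.
-/

open Finset Nat

theorem gbinom_eq_choose (x : ℝ) (n : ℕ) : gbinom x n = Ring.choose x n := by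
  rw [Ring.choose_eq_smul, ← Polynomial.aeval_eq_smeval, Polynomial.aeval_def,
    Polynomial.eval₂_eq_eval_map, descPochhammer_map, descPochhammer_eval_eq_prod_range, gbinom,
    smul_eq_mul, div_eq_inv_mul]

theorem hasSum_gbinom_mul_pow (x : ℝ) {v : ℝ} (hv : |v| < 1) :
    HasSum (fun n => gbinom x n * v ^ n) ((1 + v) ^ x) := by
  have hv' : v ∈ Metric.eball (0 : ℝ) 1 := by
    simpa [Metric.mem_eball, edist_dist, Real.dist_eq] using hv
  simpa [binomialSeries, FormalMultilinearSeries.ofScalars_apply_eq, gbinom_eq_choose, mul_comm]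
    using (Real.one_add_rpow_hasFPowerSeriesOnBall_zero (a := x)).hasSum hv'

theorem abs_gbinom_le (x : ℝ) (n : ℕ) : |gbinom x n| ≤ (-1) ^ n * gbinom (-|x|) n := by
  have hrising : (-1) ^ n * ∏ j ∈ range n, (-|x| - j) = ∏ j ∈ range n, (|x| + j) := by
    have h := prod_neg (s := range n) fun j : ℕ => -|x| - (j : ℝ)
    rw [card_range] at h
    rw [← h]
    exact prod_congr rfl fun j _ => by ring
  rw [gbinom, gbinom, abs_div, Nat.abs_cast, mul_div_assoc', hrising, abs_prod]
  gcongr with j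
  exact (abs_sub _ _).trans_eq (by rw [Nat.abs_cast])

theorem hasSum_pow_div_factorial_exp (x : ℝ) : HasSum (fun r => x ^ r / r !) (Real.exp x) := by
  rw [Real.exp_eq_exp_ℝ]
  exact NormedSpace.expSeries_div_hasSum_exp x

theorem summable_abs_pow_div_factorial_mul_gbinom (y β : ℝ) {v : ℝ} (hv : |v| < 1) :
    Summable fun p : ℕ × ℕ =>
      |y| ^ p.1 / p.1 ! * ((-1) ^ p.2 * gbinom (-(|β| * p.1)) p.2) * |v| ^ p.2 := by
  have hrow (r : ℕ) : HasSum
      (fun n => |y| ^ r / r ! * ((-1) ^ n * gbinom (-(|β| * r)) n) * |v| ^ n)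
      ((|y| * (1 - |v|) ^ (-|β|)) ^ r / r !) := by
    have h := (hasSum_gbinom_mul_pow (-(|β| * r)) (v := -|v|)
      (by rwa [abs_neg, abs_abs])).mul_left (|y| ^ r / r !)
    have hterm : (fun n => |y| ^ r / r ! * ((-1) ^ n * gbinom (-(|β| * r)) n) * |v| ^ n)
        = fun n => |y| ^ r / r ! * (gbinom (-(|β| * r)) n * (-|v|) ^ n) := by
      funext n
      rw [neg_pow]
      ring
    have hval : (|y| * (1 - |v|) ^ (-|β|)) ^ r / r !
        = |y| ^ r / r ! * (1 + -|v|) ^ (-(|β| * r)) := by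
      rw [← sub_eq_add_neg, ← neg_mul, Real.rpow_mul_natCast (by linarith), mul_pow]
      ring
    rw [hterm, hval]
    exact h
  have hnonneg : 0 ≤ fun p : ℕ × ℕ =>
      |y| ^ p.1 / p.1 ! * ((-1) ^ p.2 * gbinom (-(|β| * p.1)) p.2) * |v| ^ p.2 := by
    intro ⟨r, n⟩
    have h := abs_gbinom_le (|β| * r) n
    rw [abs_mul, abs_abs, Nat.abs_cast] at h
    have := (abs_nonneg _).trans h
    positivity
  exact (summable_prod_of_nonneg hnonneg).2
    ⟨fun r => (hrow r).summable,
      (hasSum_pow_div_factorial_exp _).summable.congr fun r => ((hrow r).tsum_eq).symm⟩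

theorem hasSum_pow_div_factorial_mul_gbinom_mul_pow (y β : ℝ) {v : ℝ} (hv : |v| < 1) :
    HasSum (fun p : ℕ × ℕ => y ^ p.1 / p.1 ! * gbinom (β * p.1) p.2 * v ^ p.2)
      (Real.exp (y * (1 + v) ^ β)) := by
  have hsum : Summable fun p : ℕ × ℕ => y ^ p.1 / p.1 ! * gbinom (β * p.1) p.2 * v ^ p.2 := by
    refine (summable_abs_pow_div_factorial_mul_gbinom y β hv).of_norm_bounded fun ⟨r, n⟩ => ?_
    have h := abs_gbinom_le (β * r) n
    rw [abs_mul, Nat.abs_cast] at h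
    simp only [Real.norm_eq_abs, abs_mul, abs_div, abs_pow, Nat.abs_cast]
    gcongr
  have hrow (r : ℕ) : HasSum (fun n => y ^ r / r ! * gbinom (β * r) n * v ^ n)
      ((y * (1 + v) ^ β) ^ r / r !) := by
    have hval : (y * (1 + v) ^ β) ^ r / r ! = y ^ r / r ! * (1 + v) ^ (β * r) := by
      rw [Real.rpow_mul_natCast (by linarith [neg_abs_le v]), mul_pow]
      ring
    simp only [hval, mul_assoc]
    exact (hasSum_gbinom_mul_pow (β * r) hv).mul_left (y ^ r / r !)
  rw [← (hsum.hasSum.prod_fiberwise hrow).unique (hasSum_pow_div_factorial_exp _)]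
  exact hsum.hasSum

theorem summable_pow_div_factorial_mul_gbinom (y β : ℝ) (n : ℕ) :
    Summable fun r : ℕ => y ^ r / r ! * gbinom (β * r) n := by
  -- any `v ≠ 0` would do; a column of the double series at `v` is this series times `v ^ n`
  have h : Summable fun r : ℕ => y ^ r / r ! * gbinom (β * r) n * (1 / 2 : ℝ) ^ n :=
    (hasSum_pow_div_factorial_mul_gbinom_mul_pow y β (v := 1 / 2)
      (by norm_num)).summable.prod_symm.prod_factor n
  exact (summable_mul_right_iff (by positivity)).1 h

theorem hasSum_pow_mul_tsum_pow_div_factorial_mul_gbinom (y β : ℝ) {v : ℝ} (hv : |v| < 1) :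
    HasSum (fun n : ℕ => v ^ n * ∑' r : ℕ, y ^ r / r ! * gbinom (β * r) n)
      (Real.exp (y * (1 + v) ^ β)) := by
  refine ((Equiv.prodComm ℕ ℕ).hasSum_iff.2
    (hasSum_pow_div_factorial_mul_gbinom_mul_pow y β hv)).prod_fiberwise fun n => ?_
  simp only [Function.comp_apply, Equiv.prodComm_apply, Prod.swap_prod_mk, mul_comm (v ^ n)]
  exact (summable_pow_div_factorial_mul_gbinom y β n).hasSum.mul_right (v ^ n)

theorem stmt_6_general (lam α t u : ℝ) (hlam : 0 < lam)
    (hu : u ∈ Set.Ico (0 : ℝ) 1) :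
    (∀ n : ℕ, Summable (fun r : ℕ =>
        ((-1 : ℝ) ^ (r + n) / (r.factorial : ℝ)) * lam ^ (α * r) * t ^ r *
          gbinom (α * r) n)) ∧
      HasSum
        (fun n : ℕ => u ^ n *
          ∑' r : ℕ, ((-1 : ℝ) ^ (r + n) / (r.factorial : ℝ)) * lam ^ (α * r) * t ^ r *
            gbinom (α * r) n)
        (Real.exp (-(lam ^ α * t * (1 - u) ^ α))) := by
  have hterm (r n : ℕ) : (-1 : ℝ) ^ (r + n) / r ! * lam ^ (α * r) * t ^ r * gbinom (α * r) n
      = (-1) ^ n * ((-(lam ^ α * t)) ^ r / r ! * gbinom (α * r) n) := by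
    rw [Real.rpow_mul_natCast hlam.le, pow_add, neg_pow (lam ^ α * t), mul_pow]
    ring
  simp only [hterm, tsum_mul_left]
  refine ⟨fun n => (summable_pow_div_factorial_mul_gbinom _ α n).mul_left _, ?_⟩
  convert hasSum_pow_mul_tsum_pow_div_factorial_mul_gbinom (-(lam ^ α * t)) α (v := -u)
    (by rw [abs_neg, abs_of_nonneg hu.1]; exact hu.2) using 1
  · funext n
    rw [neg_pow]
    ring
  · rw [← sub_eq_add_neg, neg_mul]

theorem stmt_6 (lam α t u : ℝ) (hlam : 0 < lam) (hα : α ∈ Set.Ioo (0 : ℝ) 1)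
    (ht : 0 ≤ t) (hu : u ∈ Set.Ico (0 : ℝ) 1) :
    (∀ n : ℕ, Summable (fun r : ℕ =>
        ((-1 : ℝ) ^ (r + n) / (r.factorial : ℝ)) * lam ^ (α * r) * t ^ r *
          gbinom (α * r) n)) ∧
      HasSum
        (fun n : ℕ => u ^ n *
          ∑' r : ℕ, ((-1 : ℝ) ^ (r + n) / (r.factorial : ℝ)) * lam ^ (α * r) * t ^ r *
            gbinom (α * r) n)
        (Real.exp (-(lam ^ α * t * (1 - u) ^ α))) :=
  stmt_6_general lam α t u hlam hu
end

section
/- Let α : [0,∞) → (0,1) be continuous, let λ > 0 and t > 0. Then exp(−∫_0^t λ^{α(s)} ds) + ∑_{n=1}^∞ ∑_{r=1}^∞ ((−1)^{n+r}/r!) ∫_{[0,t]^r} λ^{β_r(s₁,…,s_r)} binom(β_r(s₁,…,s_r), n) ds₁⋯ds_r = 1. -/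
/-!
By Pascal's rule the alternating partial sums of the binomial series at `-1` telescope:
`∑_{n ≤ N} (-1)ⁿ binom(x, n) = (-1)ᴺ binom(x - 1, N) = ∏_{j < N} (1 - x / (j + 1))`, and for
`x > 0` this product tends to `0` because the harmonic series diverges. Hence
`∑_{n ≥ 1} (-1)ⁿ binom(β_r, n) = -1` on `[0, t]^r`, and since `λ^{β_r(s)} = ∏ λ^{α(s_j)}` the
`n`-series of the `r`-th row sums to `-(-1)^r (∫_0^t λ^α)^r / r!`. The rows add up to
`1 - exp(-∫_0^t λ^α)`.

Both interchanges of summation (with the integral and between `n` and `r`) are justified by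
`∑ₙ |binom(x, n)| ≤ 2^r` for `0 ≤ x ≤ r`, which Pascal's rule reduces to the case `x ≤ 1`,
where all terms but the first have the same sign. It dominates the double series by
`∑_r (2 ∫_0^t λ^α)^r / r!`.
-/

open MeasureTheory

open Finset Filter Topology

lemma gbinom_zero_right (x : ℝ) : gbinom x 0 = 1 := by
  simp [gbinom]

lemma gbinom_succ_succ (x : ℝ) (k : ℕ) :
    gbinom (x + 1) (k + 1) = gbinom x k + gbinom x (k + 1) := by
  have hshift : ∏ j ∈ range (k + 1), (x + 1 - j) = (∏ j ∈ range k, (x - j)) * (x + 1) := by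
    rw [prod_range_succ']
    push_cast
    congr 1
    · exact prod_congr rfl fun j _ => by ring
    · ring
  have hk : (k.factorial : ℝ) ≠ 0 := by positivity
  rw [gbinom, gbinom, gbinom, hshift, prod_range_succ, Nat.factorial_succ]
  push_cast
  field_simp
  ring

lemma neg_one_pow_mul_gbinom (x : ℝ) (n : ℕ) :
    (-1) ^ n * gbinom x n = ∏ j ∈ range n, (j - x) / (j + 1) := by
  have hsign : (-1 : ℝ) ^ n = ∏ _j ∈ range n, (-1 : ℝ) := by simp
  rw [gbinom, ← prod_range_add_one_eq_factorial, prod_div_distrib, ← mul_div_assoc, hsign,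
    ← prod_mul_distrib]
  push_cast
  exact congrArg₂ _ (prod_congr rfl fun j _ => by ring) rfl

lemma sum_range_succ_neg_one_pow_mul_gbinom (x : ℝ) (N : ℕ) :
    ∑ n ∈ range (N + 1), (-1) ^ n * gbinom x n = (-1) ^ N * gbinom (x - 1) N := by
  induction N with
  | zero => simp [gbinom_zero_right]
  | succ N ih =>
    have hpascal := gbinom_succ_succ (x - 1) N
    rw [sub_add_cancel] at hpascal
    rw [sum_range_succ, ih, hpascal]
    ring

lemma neg_one_pow_mul_gbinom_sub_one (x : ℝ) (N : ℕ) :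
    (-1) ^ N * gbinom (x - 1) N = ∏ j ∈ range N, (1 - x / (j + 1)) := by
  rw [neg_one_pow_mul_gbinom]
  refine prod_congr rfl fun j _ => ?_
  field_simp
  ring

lemma tendsto_prod_range_one_sub_nhds_zero {f : ℕ → ℝ} (hf : ∀ j, f j ≤ 1)
    (hsum : Tendsto (fun N => ∑ j ∈ range N, f j) atTop atTop) :
    Tendsto (fun N => ∏ j ∈ range N, (1 - f j)) atTop (𝓝 0) := by
  refine squeeze_zero (fun N => prod_nonneg fun j _ => sub_nonneg.2 (hf j)) (fun N => ?_)
    (Real.tendsto_exp_neg_atTop_nhds_zero.comp hsum)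
  calc ∏ j ∈ range N, (1 - f j) ≤ ∏ j ∈ range N, Real.exp (-f j) :=
        prod_le_prod (fun j _ => sub_nonneg.2 (hf j)) fun j _ => Real.one_sub_le_exp_neg _
    _ = Real.exp (-∑ j ∈ range N, f j) := by rw [← Real.exp_sum, sum_neg_distrib]

lemma tendsto_prod_range_one_sub_div_succ_nhds_zero {x : ℝ} (hx : 0 < x) :
    Tendsto (fun N => ∏ j ∈ range N, (1 - x / (j + 1))) atTop (𝓝 0) := by
  -- beyond `M = ⌈x⌉₊` the factors lie in `[0, 1]`
  set M := ⌈x⌉₊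
  have hxM : x ≤ M := Nat.le_ceil x
  rw [← tendsto_add_atTop_iff_nat M]
  simp only [add_comm _ M, prod_range_add]
  rw [← mul_zero (∏ j ∈ range M, (1 - x / (j + 1)))]
  refine (tendsto_prod_range_one_sub_nhds_zero (fun j => ?_) ?_).const_mul _
  · push_cast
    rw [div_le_one (by positivity)]
    linarith [(Nat.cast_nonneg j : (0 : ℝ) ≤ j)]
  · have hharm := Real.tendsto_sum_range_one_div_nat_succ_atTop.const_mul_atTop
      (show 0 < x / (M + 1) by positivity)
    refine tendsto_atTop_mono (fun N => ?_) hharm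
    rw [mul_sum]
    refine sum_le_sum fun j _ => ?_
    push_cast
    rw [div_mul_div_comm, mul_one]
    gcongr
    nlinarith [(Nat.cast_nonneg j : (0 : ℝ) ≤ j), (Nat.cast_nonneg M : (0 : ℝ) ≤ M)]

lemma neg_one_pow_mul_gbinom_succ_nonpos {x : ℝ} (hx0 : 0 ≤ x) (hx1 : x ≤ 1) (n : ℕ) :
    (-1) ^ (n + 1) * gbinom x (n + 1) ≤ 0 := by
  rw [neg_one_pow_mul_gbinom, prod_range_succ']
  refine mul_nonpos_of_nonneg_of_nonpos (prod_nonneg fun j _ => ?_) (by simpa using hx0)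
  push_cast
  exact div_nonneg (by linarith [(Nat.cast_nonneg j : (0 : ℝ) ≤ j)]) (by positivity)

lemma sum_range_abs_gbinom_le_two {x : ℝ} (hx0 : 0 ≤ x) (hx1 : x ≤ 1) (N : ℕ) :
    ∑ n ∈ range N, |gbinom x n| ≤ 2 := by
  rcases N with _ | N
  · simp
  have habs (n : ℕ) : |gbinom x (n + 1)| = -((-1) ^ (n + 1) * gbinom x (n + 1)) := by
    rw [← abs_of_nonpos (neg_one_pow_mul_gbinom_succ_nonpos hx0 hx1 n), abs_mul,
      abs_neg_one_pow, one_mul]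
  have hprod : 0 ≤ ∏ j ∈ range N, (1 - x / (j + 1)) := prod_nonneg fun j _ => by
    rw [sub_nonneg, div_le_one (by positivity)]
    linarith [(Nat.cast_nonneg j : (0 : ℝ) ≤ j)]
  have halt := sum_range_succ_neg_one_pow_mul_gbinom x N
  rw [neg_one_pow_mul_gbinom_sub_one, sum_range_succ'] at halt
  rw [sum_range_succ', sum_congr rfl fun n _ => habs n, sum_neg_distrib]
  simp only [gbinom_zero_right, pow_zero, one_mul, abs_one] at halt ⊢
  linarith

lemma sum_range_abs_gbinom_le_two_pow {k : ℕ} {x : ℝ} (hx0 : 0 ≤ x) (hxk : x ≤ k + 1)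
    (N : ℕ) : ∑ n ∈ range N, |gbinom x n| ≤ 2 ^ (k + 1) := by
  induction k generalizing x N with
  | zero => simpa using sum_range_abs_gbinom_le_two hx0 (by simpa using hxk) N
  | succ k ih =>
    by_cases hx1 : x ≤ 1
    · calc ∑ n ∈ range N, |gbinom x n| ≤ 2 := sum_range_abs_gbinom_le_two hx0 hx1 N
        _ ≤ 2 ^ (k + 1 + 1) := by
          rw [pow_succ]
          nlinarith [one_le_pow₀ (M₀ := ℝ) (n := k + 1) one_le_two]
    have ih' := ih (x := x - 1) (by linarith) (by push_cast at hxk; linarith)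
    rcases N with _ | N
    · simp
    have hpascal (n : ℕ) : |gbinom x (n + 1)| ≤ |gbinom (x - 1) n| + |gbinom (x - 1) (n + 1)| := by
      have := gbinom_succ_succ (x - 1) n
      rw [sub_add_cancel] at this
      exact this ▸ abs_add_le _ _
    have hshift := ih' (N + 1)
    rw [sum_range_succ'] at hshift ⊢
    simp only [gbinom_zero_right] at hshift ⊢
    have := sum_le_sum fun n (_ : n ∈ range N) => hpascal n
    rw [sum_add_distrib] at this
    linarith [ih' N, pow_succ (2 : ℝ) (k + 1)]

lemma continuous_gbinom (n : ℕ) : Continuous fun x => gbinom x n := by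
  unfold gbinom
  fun_prop

lemma abs_gbinom_le_two_pow {k : ℕ} {x : ℝ} (hx0 : 0 ≤ x) (hxk : x ≤ k + 1) (n : ℕ) :
    |gbinom x n| ≤ 2 ^ (k + 1) :=
  (single_le_sum (fun i _ => abs_nonneg (gbinom x i)) (self_mem_range_succ n)).trans
    (sum_range_abs_gbinom_le_two_pow hx0 hxk (n + 1))

lemma summable_abs_gbinom {x : ℝ} (hx : 0 ≤ x) : Summable fun n => |gbinom x n| :=
  summable_of_sum_range_le (fun _ => abs_nonneg _)
    (sum_range_abs_gbinom_le_two_pow (k := ⌈x⌉₊) hx (by linarith [Nat.le_ceil x]))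

lemma hasSum_neg_one_pow_mul_gbinom {x : ℝ} (hx : 0 < x) :
    HasSum (fun n => (-1) ^ n * gbinom x n) 0 := by
  have hsum : Summable fun n => (-1) ^ n * gbinom x n :=
    (summable_abs_gbinom hx.le).of_norm_bounded fun n => by
      rw [norm_mul, norm_pow, norm_neg, norm_one, one_pow, one_mul, Real.norm_eq_abs]
  rw [hsum.hasSum_iff_tendsto_nat, ← tendsto_add_atTop_iff_nat 1]
  simp only [sum_range_succ_neg_one_pow_mul_gbinom, neg_one_pow_mul_gbinom_sub_one]
  exact tendsto_prod_range_one_sub_div_succ_nhds_zero hx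

section Integral

variable {X : Type*} [MeasurableSpace X] {μ : Measure X} {w b : X → ℝ} {k : ℕ}
  (hw : Integrable w μ) (hb : AEStronglyMeasurable b μ)
include hw hb

lemma integrable_mul_gbinom (hbk : ∀ᵐ s ∂μ, b s ∈ Set.Icc 0 (k + 1 : ℝ)) (n : ℕ) :
    Integrable (fun s => w s * gbinom (b s) n) μ :=
  hw.mul_bdd ((continuous_gbinom n).comp_aestronglyMeasurable hb)
    (hbk.mono fun _ hs => (Real.norm_eq_abs _).trans_le (abs_gbinom_le_two_pow hs.1 hs.2 n))

lemma sum_range_integral_abs_mul_gbinom_le (hbk : ∀ᵐ s ∂μ, b s ∈ Set.Icc 0 (k + 1 : ℝ))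
    (N : ℕ) :
    ∑ n ∈ range N, ∫ s, |w s * gbinom (b s) n| ∂μ ≤ 2 ^ (k + 1) * ∫ s, |w s| ∂μ := by
  rw [← integral_finsetSum _ fun n _ => (integrable_mul_gbinom hw hb hbk n).abs,
    ← integral_const_mul]
  refine integral_mono_ae
    (integrable_finsetSum _ fun n _ => (integrable_mul_gbinom hw hb hbk n).abs)
    (hw.abs.const_mul _) (hbk.mono fun s hs => ?_)
  simp only [abs_mul, ← mul_sum]
  rw [mul_comm]
  exact mul_le_mul_of_nonneg_right (sum_range_abs_gbinom_le_two_pow hs.1 hs.2 N) (abs_nonneg _)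

lemma summable_integral_abs_mul_gbinom (hbk : ∀ᵐ s ∂μ, b s ∈ Set.Icc 0 (k + 1 : ℝ)) :
    Summable fun n => ∫ s, |w s * gbinom (b s) n| ∂μ :=
  summable_of_sum_range_le (fun _ => integral_nonneg fun _ => abs_nonneg _)
    (sum_range_integral_abs_mul_gbinom_le hw hb hbk)

lemma hasSum_integral_mul_neg_one_pow_mul_gbinom (hbk : ∀ᵐ s ∂μ, b s ∈ Set.Ioc 0 (k + 1 : ℝ)) :
    HasSum (fun n => ∫ s, w s * ((-1) ^ n * gbinom (b s) n) ∂μ) 0 := by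
  have hbk' := hbk.mono fun _ hs => Set.Ioc_subset_Icc_self hs
  have hsum := hasSum_integral_of_summable_integral_norm
    (F := fun n s => w s * ((-1) ^ n * gbinom (b s) n))
    (fun n => ((integrable_mul_gbinom hw hb hbk' n).const_mul ((-1) ^ n)).congr
      (ae_of_all _ fun s => by ring))
    ((summable_integral_abs_mul_gbinom hw hb hbk').congr fun n => by
      simp only [norm_mul, norm_pow, norm_neg, norm_one, one_pow, one_mul, Real.norm_eq_abs,
        abs_mul])
  rwa [integral_eq_zero_of_ae (hbk.mono fun s hs => by
    simp only [tsum_mul_left, (hasSum_neg_one_pow_mul_gbinom hs.1).tsum_eq, mul_zero,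
      Pi.zero_apply])] at hsum

end Integral

lemma setIntegral_univ_pi_prod_eq_pow {ι E : Type*} [Fintype ι] [MeasurableSpace E]
    {μ : Measure E} [SigmaFinite μ] (S : Set E) (g : E → ℝ) :
    ∫ s in Set.univ.pi (fun _ : ι => S), ∏ i, g (s i) ∂(Measure.pi fun _ => μ)
      = (∫ x in S, g x ∂μ) ^ Fintype.card ι := by
  rw [Measure.restrict_pi_pi, integral_fintype_prod_eq_pow]

lemma hasSum_neg_one_pow_mul_pow_succ_div_factorial (y : ℝ) :
    HasSum (fun r : ℕ => (-1) ^ r * y ^ (r + 1) / ((r + 1).factorial : ℝ)) (1 - Real.exp (-y)) := by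
  have hexp := ((hasSum_nat_add_iff' 1).mpr
    (Real.exp_eq_exp_ℝ ▸ NormedSpace.expSeries_div_hasSum_exp (-y))).neg
  rw [range_one, sum_singleton, pow_zero, Nat.factorial_zero, Nat.cast_one, div_one,
    neg_sub] at hexp
  refine hexp.congr_fun fun r => ?_
  rw [neg_pow y, pow_succ (-1 : ℝ)]
  ring

section BetaSum

variable {α : ℝ → ℝ}

lemma continuousOn_betaSum {r : ℕ} {S : Set ℝ} (hαc : ContinuousOn α S) :
    ContinuousOn (betaSum α (r := r)) (Set.univ.pi fun _ => S) :=
  continuousOn_finsetSum _ fun j _ =>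
    hαc.comp (continuous_apply j).continuousOn fun _ hs => hs j (Set.mem_univ j)

lemma betaSum_mem_Ioc {S : Set ℝ} (hα : ∀ s ∈ S, α s ∈ Set.Ioo (0 : ℝ) 1) {r : ℕ}
    {s : Fin (r + 1) → ℝ} (hs : s ∈ Set.univ.pi fun _ => S) :
    betaSum α s ∈ Set.Ioc 0 (r + 1 : ℝ) := by
  have hαs (j : Fin (r + 1)) := hα _ (hs j (Set.mem_univ j))
  constructor
  · exact sum_pos (fun j _ => (hαs j).1) univ_nonempty
  · simpa [betaSum] using sum_le_sum fun j (_ : j ∈ univ) => (hαs j).2.le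

lemma setIntegral_rpow_betaSum {lam : ℝ} (hlam : 0 < lam) (r : ℕ) (S : Set ℝ) :
    ∫ s in Set.univ.pi (fun _ : Fin r => S), lam ^ betaSum α s = (∫ x in S, lam ^ α x) ^ r := by
  simp only [betaSum, Real.rpow_sum_of_pos hlam]
  rw [volume_pi, setIntegral_univ_pi_prod_eq_pow S (fun x => lam ^ α x), Fintype.card_fin]

lemma aestronglyMeasurable_betaSum {S : Set ℝ} (hS : MeasurableSet S) (hαc : ContinuousOn α S)
    (r : ℕ) : AEStronglyMeasurable (betaSum α) (volume.restrict (Set.univ.pi fun _ : Fin r => S)) :=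
  (continuousOn_betaSum hαc).aestronglyMeasurable (MeasurableSet.univ_pi fun _ => hS)

lemma integrableOn_rpow_betaSum {S : Set ℝ} (hS : IsCompact S) (hαc : ContinuousOn α S)
    {lam : ℝ} (hlam : lam ≠ 0) (r : ℕ) :
    IntegrableOn (fun s => lam ^ betaSum α s) (Set.univ.pi fun _ : Fin r => S) :=
  ((Real.continuous_const_rpow hlam).comp_continuousOn
    (continuousOn_betaSum hαc)).integrableOn_compact (isCompact_univ_pi fun _ => hS)

lemma ae_restrict_betaSum_mem_Ioc {S : Set ℝ} (hS : MeasurableSet S)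
    (hα : ∀ s ∈ S, α s ∈ Set.Ioo (0 : ℝ) 1) (r : ℕ) :
    ∀ᵐ s ∂volume.restrict (Set.univ.pi fun _ : Fin (r + 1) => S),
      betaSum α s ∈ Set.Ioc 0 (r + 1 : ℝ) :=
  ae_restrict_of_forall_mem (MeasurableSet.univ_pi fun _ => hS) fun _ hs => betaSum_mem_Ioc hα hs

end BetaSum

noncomputable def seriesTerm (α : ℝ → ℝ) (lam t : ℝ) (n r : ℕ) : ℝ :=
  ((-1 : ℝ) ^ ((n + 1) + (r + 1)) / ((r + 1).factorial : ℝ)) *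
    ∫ s : Fin (r + 1) → ℝ in Set.univ.pi (fun _ => Set.Icc (0 : ℝ) t),
      lam ^ betaSum α s * gbinom (betaSum α s) (n + 1)

section SeriesTerm

variable {α : ℝ → ℝ} {lam t : ℝ}

lemma abs_seriesTerm_le (n r : ℕ) :
    |seriesTerm α lam t n r| ≤
      (∫ s : Fin (r + 1) → ℝ in Set.univ.pi (fun _ => Set.Icc (0 : ℝ) t),
        |lam ^ betaSum α s * gbinom (betaSum α s) (n + 1)|) / (r + 1).factorial := by
  rw [seriesTerm, abs_mul, abs_div, abs_neg_one_pow, Nat.abs_cast, one_div_mul_eq_div]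
  gcongr
  exact abs_integral_le_integral_abs

variable (hα : ∀ s ∈ Set.Icc 0 t, α s ∈ Set.Ioo (0 : ℝ) 1)
  (hαc : ContinuousOn α (Set.Icc 0 t)) (hlam : 0 < lam)
include hα hαc hlam

lemma hasSum_seriesTerm (r : ℕ) :
    HasSum (fun n => seriesTerm α lam t n r)
      ((-1) ^ r * (∫ x in Set.Icc 0 t, lam ^ α x) ^ (r + 1) / (r + 1).factorial) := by
  have h := (hasSum_nat_add_iff' 1).mpr (hasSum_integral_mul_neg_one_pow_mul_gbinom
    (integrableOn_rpow_betaSum isCompact_Icc hαc hlam.ne' (r + 1))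
    (aestronglyMeasurable_betaSum measurableSet_Icc hαc (r + 1))
    (ae_restrict_betaSum_mem_Ioc measurableSet_Icc hα r))
  set I := ∫ x in Set.Icc 0 t, lam ^ α x
  simp only [sum_range_one, pow_zero, gbinom_zero_right, mul_one,
    setIntegral_rpow_betaSum hlam] at h
  rw [show (-1) ^ r * I ^ (r + 1) / (r + 1).factorial
    = (-1) ^ (r + 1) / (r + 1).factorial * (0 - I ^ (r + 1)) by ring]
  refine (h.mul_left _).congr_fun fun n => ?_
  simp only [seriesTerm, mul_left_comm _ ((-1 : ℝ) ^ (n + 1)), integral_const_mul]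
  ring

lemma sum_range_abs_seriesTerm_le (r N : ℕ) :
    ∑ n ∈ range N, |seriesTerm α lam t n r|
      ≤ (2 * ∫ x in Set.Icc 0 t, lam ^ α x) ^ (r + 1) / (r + 1).factorial := by
  have hbound := sum_range_integral_abs_mul_gbinom_le
    (integrableOn_rpow_betaSum isCompact_Icc hαc hlam.ne' (r + 1))
    (aestronglyMeasurable_betaSum measurableSet_Icc hαc (r + 1))
    ((ae_restrict_betaSum_mem_Ioc measurableSet_Icc hα r).mono
      fun _ hs => Set.Ioc_subset_Icc_self hs) (N + 1)
  simp only [abs_of_pos (Real.rpow_pos_of_pos hlam _), setIntegral_rpow_betaSum hlam] at hbound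
  calc ∑ n ∈ range N, |seriesTerm α lam t n r|
      ≤ ∑ n ∈ range N, (∫ s : Fin (r + 1) → ℝ in Set.univ.pi (fun _ => Set.Icc (0 : ℝ) t),
          |lam ^ betaSum α s * gbinom (betaSum α s) (n + 1)|) / (r + 1).factorial :=
        sum_le_sum fun n _ => abs_seriesTerm_le n r
    _ ≤ ∑ n ∈ range (N + 1), (∫ s : Fin (r + 1) → ℝ in Set.univ.pi (fun _ => Set.Icc (0 : ℝ) t),
          |lam ^ betaSum α s * gbinom (betaSum α s) n|) / (r + 1).factorial := by
        rw [sum_range_succ' _ N]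
        exact le_add_of_nonneg_right (by positivity)
    _ ≤ (2 * ∫ x in Set.Icc 0 t, lam ^ α x) ^ (r + 1) / (r + 1).factorial := by
        rw [← sum_div, mul_pow]
        gcongr

lemma summable_seriesTerm_uncurry :
    Summable (Function.uncurry fun r n => seriesTerm α lam t n r) := by
  have hrow (r : ℕ) := sum_range_abs_seriesTerm_le hα hαc hlam (t := t) r
  refine Summable.of_abs ((summable_prod_of_nonneg fun _ => abs_nonneg _).mpr
    ⟨fun r => summable_of_sum_range_le (fun _ => abs_nonneg _) (hrow r), ?_⟩)
  exact Summable.of_nonneg_of_le (fun _ => tsum_nonneg fun _ => abs_nonneg _)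
    (fun r => Real.tsum_le_of_sum_range_le (fun _ => abs_nonneg _) (hrow r))
    ((summable_nat_add_iff 1).mpr (Real.summable_pow_div_factorial _))

end SeriesTerm

theorem stmt_17 (α : ℝ → ℝ) (hα : ∀ s ∈ Set.Ici (0 : ℝ), α s ∈ Set.Ioo (0 : ℝ) 1)
    (hαc : ContinuousOn α (Set.Ici 0)) (lam : ℝ) (hlam : 0 < lam) (t : ℝ) (ht : 0 < t) :
    Real.exp (-(∫ s in (0 : ℝ)..t, lam ^ α s))
        + ∑' n : ℕ, ∑' r : ℕ,
            ((-1 : ℝ) ^ ((n + 1) + (r + 1)) / ((r + 1).factorial : ℝ)) *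
              ∫ s : Fin (r + 1) → ℝ in Set.univ.pi (fun _ => Set.Icc (0 : ℝ) t),
                lam ^ betaSum α s * gbinom (betaSum α s) (n + 1)
      = 1 := by
  have hα' : ∀ s ∈ Set.Icc 0 t, α s ∈ Set.Ioo (0 : ℝ) 1 := fun s hs => hα s hs.1
  have hαc' : ContinuousOn α (Set.Icc 0 t) := hαc.mono Set.Icc_subset_Ici_self
  change _ + ∑' n, ∑' r, seriesTerm α lam t n r = 1
  rw [intervalIntegral.integral_of_le ht.le, ← integral_Icc_eq_integral_Ioc,
    (summable_seriesTerm_uncurry hα' hαc' hlam).tsum_comm,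
    tsum_congr fun r => (hasSum_seriesTerm hα' hαc' hlam r).tsum_eq,
    (hasSum_neg_one_pow_mul_pow_succ_div_factorial _).tsum_eq]
  ring
end
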